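/- arXiv:2308.09288 — 2 statements merged into one kernel-verified Lean document; each statement's English description precedes it below -/
import Mathlib

section
/- Let χ ∈ L^∞(𝕋) with χ ≥ 0, and define P(τ) = |D| − iτχ − τ² with domain H¹(𝕋). If τ = λ + iγ with λ ∈ ℝ, λ ≠ 0, and either γ > 0 or γ < −(1/2)‖χ‖_{L^∞}, then P(τ)u = 0 with u ∈ H¹(𝕋) implies u = 0. -/
/-!
Pair the equation with `ū` and integrate over a period. The term `∫ |D|u · ū = 2π ∑ |n| |û(n)|²`
is real, while the other two terms give `iτ ∫ χ|u|² + τ² ∫ |u|²`; taking imaginary parts,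
`λ (∫ χ|u|² + 2γ ∫ |u|²) = 0`. Since `λ ≠ 0` and `χ + 2γ` has a strict sign under either
hypothesis on `γ` (because `0 ≤ χ ≤ M`), `∫ |u|² = 0`, and `u` vanishes by continuity and
periodicity.
-/

open scoped Real

/-- The `L²(𝕋)` norm of a (2π-periodic) function, computed over one period. -/
noncomputable def l2norm (f : ℝ → ℂ) : ℝ :=
  Real.sqrt (∫ x in (0:ℝ)..(2 * π), ‖f x‖ ^ 2)

/-- The `n`-th Fourier coefficient of a `2π`-periodic function. -/
noncomputable def fc (u : ℝ → ℂ) (n : ℤ) : ℂ :=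
  (1 / (2 * π)) * ∫ x in (0:ℝ)..(2 * π), Complex.exp (-Complex.I * (n : ℂ) * (x : ℂ)) * u x

/-- The fractional Laplacian `|D|`, the Fourier multiplier with symbol `|n|`. -/
noncomputable def absD (u : ℝ → ℂ) : ℝ → ℂ :=
  fun x => ∑' n : ℤ, ((|n| : ℤ) : ℂ) * fc u n * Complex.exp (Complex.I * (n : ℂ) * (x : ℂ))

/-- The semiclassical Fourier multiplier `g(hD)`. -/
noncomputable def fourierMult (g : ℝ → ℝ) (h : ℝ) (u : ℝ → ℂ) : ℝ → ℂ :=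
  fun x => ∑' n : ℤ, (g (h * n) : ℂ) * fc u n * Complex.exp (Complex.I * (n : ℂ) * (x : ℂ))

/-- The semiclassically rescaled stationary damped operator
`𝒫(h,z)u = h|D|u - i√h z χ u - z² u`. -/
noncomputable def Pcal (χ : ℝ → ℝ) (h : ℝ) (z : ℂ) (u : ℝ → ℂ) : ℝ → ℂ :=
  fun x => (h : ℂ) * absD u x - Complex.I * (Real.sqrt h : ℂ) * z * (χ x : ℂ) * u x
    - z ^ 2 * u x

open MeasureTheory Set ComplexConjugate

lemma norm_exp_I_mul_int_mul (n : ℤ) (x : ℝ) :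
    ‖Complex.exp (Complex.I * n * x)‖ = 1 := by
  rw [mul_assoc, ← Complex.ofReal_intCast, ← Complex.ofReal_mul]
  exact Complex.norm_exp_I_mul_ofReal _

lemma intervalIntegral.integral_conj {f : ℝ → ℂ} {a b : ℝ} :
    ∫ x in a..b, conj (f x) = conj (∫ x in a..b, f x) := by
  simp only [intervalIntegral, _root_.integral_conj, map_sub]

lemma integral_exp_mul_conj_eq_conj_fc (u : ℝ → ℂ) (n : ℤ) :
    ∫ x in (0:ℝ)..(2 * π), Complex.exp (Complex.I * n * x) * conj (u x)
      = 2 * π * conj (fc u n) := by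
  have hconj : ∀ x : ℝ, Complex.exp (Complex.I * n * x) * conj (u x)
      = conj (Complex.exp (-Complex.I * n * x) * u x) := fun x => by
    simp [← Complex.exp_conj]
  simp_rw [hconj, intervalIntegral.integral_conj, fc, map_mul, map_div₀, map_one, map_mul,
    map_ofNat, Complex.conj_ofReal]
  field_simp

lemma summable_mul_exp_iff (a : ℤ → ℂ) (x : ℝ) :
    Summable (fun n : ℤ => a n * Complex.exp (Complex.I * n * x)) ↔ Summable fun n => ‖a n‖ := by
  simp_rw [← summable_norm_iff (E := ℂ), norm_mul, norm_exp_I_mul_int_mul, mul_one]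

lemma hasSum_integral_tsum_mul_exp_mul_conj {a : ℤ → ℂ} (ha : Summable fun n => ‖a n‖)
    {u : ℝ → ℂ} (hu : Continuous u) :
    HasSum (fun n => 2 * π * (a n * conj (fc u n)))
      (∫ x in (0:ℝ)..(2 * π), (∑' n : ℤ, a n * Complex.exp (Complex.I * n * x)) * conj (u x)) := by
  have hterm : ∀ n : ℤ, ∫ x in (0:ℝ)..(2 * π), a n * Complex.exp (Complex.I * n * x) * conj (u x)
      = 2 * π * (a n * conj (fc u n)) := fun n => by
    simp_rw [mul_assoc (a n), intervalIntegral.integral_const_mul, integral_exp_mul_conj_eq_conj_fc]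
    ring
  simp_rw [← hterm, ← tsum_mul_right]
  refine intervalIntegral.hasSum_integral_of_dominated_convergence (fun n x => ‖a n‖ * ‖u x‖)
    (fun n => ?_) (fun n => ?_) ?_ ?_ ?_
  · exact Continuous.aestronglyMeasurable (by fun_prop)
  · refine ae_of_all _ fun x _ => ?_
    rw [norm_mul, norm_mul, norm_exp_I_mul_int_mul, Complex.norm_conj, mul_one]
  · exact ae_of_all _ fun x _ => ha.mul_right _
  · simp_rw [tsum_mul_right]
    exact (continuous_const.mul hu.norm).intervalIntegrable _ _
  · exact ae_of_all _ fun x _ => (((summable_mul_exp_iff a x).2 ha).mul_right _).hasSum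

-- No summability hypothesis: if `∑ ‖a n‖` diverges, the series diverges at every point and its
-- `tsum` is the junk value `0`.
lemma continuous_tsum_mul_exp (a : ℤ → ℂ) :
    Continuous fun x : ℝ => ∑' n : ℤ, a n * Complex.exp (Complex.I * n * x) := by
  by_cases ha : Summable fun n => ‖a n‖
  · refine continuous_tsum (fun n => by fun_prop) ha fun n x => ?_
    rw [norm_mul, norm_exp_I_mul_int_mul, mul_one]
  · simp_rw [tsum_eq_zero_of_not_summable (mt (summable_mul_exp_iff a _).1 ha)]
    exact continuous_const

lemma im_integral_tsum_mul_exp_mul_conj {a : ℤ → ℂ} {u : ℝ → ℂ} (hu : Continuous u)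
    (ha : ∀ n, (a n * conj (fc u n)).im = 0) :
    (∫ x in (0:ℝ)..(2 * π),
      (∑' n : ℤ, a n * Complex.exp (Complex.I * n * x)) * conj (u x)).im = 0 := by
  by_cases hs : Summable fun n => ‖a n‖
  · have him := Complex.hasSum_im (hasSum_integral_tsum_mul_exp_mul_conj hs hu)
    simp only [Complex.mul_im, ha] at him
    exact hasSum_zero.unique (by simpa using him) |>.symm
  · simp_rw [tsum_eq_zero_of_not_summable (mt (summable_mul_exp_iff a _).1 hs)]
    simp

lemma continuous_absD (u : ℝ → ℂ) : Continuous (absD u) :=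
  continuous_tsum_mul_exp _

lemma im_integral_absD_mul_conj {u : ℝ → ℂ} (hu : Continuous u) :
    (∫ x in (0:ℝ)..(2 * π), absD u x * conj (u x)).im = 0 :=
  im_integral_tsum_mul_exp_mul_conj hu fun n => by
    rw [mul_assoc, Complex.mul_conj, ← Complex.ofReal_intCast, ← Complex.ofReal_mul,
      Complex.ofReal_im]

lemma im_I_mul_mul_ofReal_add_sq_mul_ofReal (τ : ℂ) (G W : ℝ) :
    (Complex.I * τ * G + τ ^ 2 * W).im = τ.re * (G + 2 * τ.im * W) := by
  simp only [Complex.add_im, Complex.mul_im, Complex.mul_re, Complex.I_re, Complex.I_im,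
    Complex.ofReal_re, Complex.ofReal_im, pow_two]
  ring

section DampedEquation

variable {χ : ℝ → ℝ} {τ : ℂ} {u : ℝ → ℂ}

-- `χ` need not be measurable: the equation expresses `χ u` through `|D|u` and `u`.
lemma continuous_ofReal_mul_of_absD_eq (hu : Continuous u) (hτ : τ ≠ 0)
    (heq : ∀ x, absD u x - Complex.I * τ * (χ x : ℂ) * u x - τ ^ 2 * u x = 0) :
    Continuous fun x => (χ x : ℂ) * u x := by
  have hχu : (fun x => (χ x : ℂ) * u x)
      = fun x => (absD u x - τ ^ 2 * u x) / (Complex.I * τ) := by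
    funext x
    rw [eq_div_iff (mul_ne_zero Complex.I_ne_zero hτ)]
    linear_combination -heq x
  rw [hχu]
  exact ((continuous_absD u).sub (continuous_const.mul hu)).div_const _

lemma continuous_mul_norm_sq_of_absD_eq (hu : Continuous u) (hτ : τ ≠ 0)
    (heq : ∀ x, absD u x - Complex.I * τ * (χ x : ℂ) * u x - τ ^ 2 * u x = 0) :
    Continuous fun x => χ x * ‖u x‖ ^ 2 := by
  convert Complex.continuous_re.comp ((continuous_ofReal_mul_of_absD_eq hu hτ heq).mul
    (Complex.continuous_conj.comp hu)) using 1
  funext x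
  simp [mul_assoc, Complex.mul_conj', ← Complex.ofReal_pow]

lemma integral_absD_mul_conj_of_absD_eq (hu : Continuous u) (hτ : τ ≠ 0)
    (heq : ∀ x, absD u x - Complex.I * τ * (χ x : ℂ) * u x - τ ^ 2 * u x = 0) :
    ∫ x in (0:ℝ)..(2 * π), absD u x * conj (u x)
      = Complex.I * τ * ((∫ x in (0:ℝ)..(2 * π), χ x * ‖u x‖ ^ 2 : ℝ) : ℂ)
        + τ ^ 2 * ((∫ x in (0:ℝ)..(2 * π), ‖u x‖ ^ 2 : ℝ) : ℂ) := by
  have hpt : ∀ x, absD u x * conj (u x)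
      = Complex.I * τ * ((χ x * ‖u x‖ ^ 2 : ℝ) : ℂ) + τ ^ 2 * ((‖u x‖ ^ 2 : ℝ) : ℂ) := fun x => by
    push_cast
    rw [← Complex.mul_conj']
    linear_combination conj (u x) * heq x
  have hG : IntervalIntegrable (fun x => ((χ x * ‖u x‖ ^ 2 : ℝ) : ℂ)) volume 0 (2 * π) :=
    (Complex.continuous_ofReal.comp
      (continuous_mul_norm_sq_of_absD_eq hu hτ heq)).intervalIntegrable _ _
  have hW : IntervalIntegrable (fun x => ((‖u x‖ ^ 2 : ℝ) : ℂ)) volume 0 (2 * π) :=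
    (Complex.continuous_ofReal.comp (hu.norm.pow 2)).intervalIntegrable _ _
  simp_rw [hpt]
  rw [intervalIntegral.integral_add (hG.const_mul _) (hW.const_mul _),
    intervalIntegral.integral_const_mul, intervalIntegral.integral_const_mul,
    intervalIntegral.integral_ofReal, intervalIntegral.integral_ofReal]

end DampedEquation

lemma Function.Periodic.eq_zero_of_integral_norm_sq_eq_zero {E : Type*} [NormedAddCommGroup E]
    {u : ℝ → E} {T : ℝ} (hT : 0 < T) (hu : Continuous u) (hup : Function.Periodic u T)
    (h : ∫ x in (0:ℝ)..T, ‖u x‖ ^ 2 = 0) (x : ℝ) : u x = 0 := by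
  obtain ⟨y, hy, hxy⟩ := hup.exists_mem_Ico₀ hT x
  rw [hxy]
  by_contra hne
  exact (intervalIntegral.integral_pos hT (hu.norm.pow 2).continuousOn
    (fun _ _ => sq_nonneg _) ⟨y, Ico_subset_Icc_self hy, pow_pos (norm_pos_iff.2 hne) 2⟩).ne' h

theorem stmt14_general
    (χ : ℝ → ℝ) (M : ℝ) (hM : ∀ x, |χ x| ≤ M) (hpos : ∀ x, 0 ≤ χ x)
    (τ : ℂ) (hre : τ.re ≠ 0) (him : τ.im > 0 ∨ τ.im < -(1/2) * M)
    (u : ℝ → ℂ) (hu : Continuous u) (hup : Function.Periodic u (2 * π))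
    (heq : ∀ x : ℝ, absD u x - Complex.I * τ * (χ x : ℂ) * u x - τ ^ 2 * u x = 0) :
    ∀ x : ℝ, u x = 0 := by
  have hτ : τ ≠ 0 := fun h => hre (by simp [h])
  set G := ∫ x in (0:ℝ)..(2 * π), χ x * ‖u x‖ ^ 2
  set W := ∫ x in (0:ℝ)..(2 * π), ‖u x‖ ^ 2
  have hbalance : G + 2 * τ.im * W = 0 := by
    have him0 := im_integral_absD_mul_conj hu
    rw [integral_absD_mul_conj_of_absD_eq hu hτ heq,
      im_I_mul_mul_ofReal_add_sq_mul_ofReal] at him0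
    exact (mul_eq_zero.1 him0).resolve_left hre
  have hG_int := (continuous_mul_norm_sq_of_absD_eq hu hτ heq).intervalIntegrable
    (μ := volume) 0 (2 * π)
  have hW_nonneg : 0 ≤ W :=
    intervalIntegral.integral_nonneg Real.two_pi_pos.le fun x _ => by positivity
  have hG_nonneg : 0 ≤ G := intervalIntegral.integral_nonneg Real.two_pi_pos.le
    fun x _ => mul_nonneg (hpos x) (by positivity)
  have hG_le : G ≤ M * W := by
    rw [← intervalIntegral.integral_const_mul]
    refine intervalIntegral.integral_mono_on Real.two_pi_pos.le hG_int
      ((hu.norm.pow 2).intervalIntegrable _ _ |>.const_mul M) fun x _ => ?_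
    exact mul_le_mul_of_nonneg_right ((le_abs_self _).trans (hM x)) (by positivity)
  have hW : W = 0 := by rcases him with h | h <;> nlinarith
  exact hup.eq_zero_of_integral_norm_sq_eq_zero Real.two_pi_pos hu hW

/-- if `τ = λ + iγ` with `λ ≠ 0` and `γ > 0` or `γ < -‖χ‖_∞/2`, then the
equation `P(τ)u = (|D| - iτχ - τ²)u = 0` has only the trivial solution in `H¹(𝕋)`. -/
theorem stmt14
    (χ : ℝ → ℝ) (M : ℝ) (hM : ∀ x, |χ x| ≤ M) (hpos : ∀ x, 0 ≤ χ x)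
    (hper : Function.Periodic χ (2 * π))
    (τ : ℂ) (hre : τ.re ≠ 0) (him : τ.im > 0 ∨ τ.im < -(1/2) * M)
    (u : ℝ → ℂ) (hu : Continuous u) (hup : Function.Periodic u (2 * π))
    (hH1 : Summable (fun n : ℤ => (n : ℝ) ^ 2 * ‖fc u n‖ ^ 2))
    (heq : ∀ x : ℝ, absD u x - Complex.I * τ * (χ x : ℂ) * u x - τ ^ 2 * u x = 0) :
    ∀ x : ℝ, u x = 0 :=
  stmt14_general χ M hM hpos τ hre him u hu hup heq
end

section
/- Suppose the commutator [|D|, a] is bounded on L²(𝕋) with norm M, and supp a ∩ supp χ = ∅ with a ≠ 0. Then for every positive integer k, ‖P(√k)u_k‖_{L²} ≤ (M√(2π)/‖a‖_{L²}) ‖u_k‖_{L²} where u_k = a e^{ikx}; consequently there do not exist δ > 0 and C(δ) such that ‖P(τ)^{−1}‖_{L²→L²} ≤ C(δ)|τ|^{−δ} for all large real τ. -/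
open scoped Real

/- ### Auxiliary lemmas -/

lemma fc_exp (k n : ℤ) :
    fc (fun y : ℝ => Complex.exp (Complex.I * (k : ℂ) * (y : ℂ))) n
      = if n = k then 1 else 0 := by
  have hint : ∀ x : ℝ,
      Complex.exp (-Complex.I * (n : ℂ) * (x : ℂ)) * Complex.exp (Complex.I * (k : ℂ) * (x : ℂ))
        = Complex.exp ((Complex.I * ((k : ℂ) - (n : ℂ))) * (x : ℂ)) := by
    intro x
    rw [← Complex.exp_add]
    ring_nf
  unfold fc
  simp only [hint]
  by_cases h : n = k
  · subst h
    simp only [sub_self, mul_zero, zero_mul, Complex.exp_zero]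
    rw [intervalIntegral.integral_const]
    simp
    have hπ : (π:ℂ) ≠ 0 := by exact_mod_cast Real.pi_ne_zero
    field_simp
  · have hc : Complex.I * ((k : ℂ) - (n : ℂ)) ≠ 0 := by
      have hkn : (k : ℂ) ≠ (n : ℂ) := by
        intro hh
        exact h (by exact_mod_cast hh.symm)
      exact mul_ne_zero Complex.I_ne_zero (sub_ne_zero.mpr hkn)
    rw [integral_exp_mul_complex hc]
    have h2 : Complex.I * ((k : ℂ) - (n : ℂ)) * ((2 * π : ℝ) : ℂ)
        = ((k - n : ℤ) : ℂ) * (2 * (π:ℂ) * Complex.I) := by push_cast; ring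
    rw [h2, Complex.exp_int_mul_two_pi_mul_I]
    simp [h]

lemma fc_exp_nat (k : ℕ) (n : ℤ) :
    fc (fun y : ℝ => Complex.exp (Complex.I * (k : ℂ) * (y : ℂ))) n
      = if n = (k : ℤ) then 1 else 0 := by
  have := fc_exp (k : ℤ) n
  simpa using this

lemma absD_exp (k : ℕ) (x : ℝ) :
    absD (fun y : ℝ => Complex.exp (Complex.I * (k : ℂ) * (y : ℂ))) x
      = (k : ℂ) * Complex.exp (Complex.I * (k : ℂ) * (x : ℂ)) := by
  unfold absD
  rw [tsum_eq_single (k : ℤ) (by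
    intro n hn
    rw [fc_exp_nat k n, if_neg hn]
    ring)]
  rw [fc_exp_nat k (k : ℤ), if_pos rfl, Int.abs_natCast]
  push_cast
  ring

lemma norm_exp_I (k : ℕ) (x : ℝ) : ‖Complex.exp (Complex.I * (k : ℂ) * (x : ℂ))‖ = 1 := by
  rw [Complex.norm_exp]
  have : (Complex.I * (k : ℂ) * (x : ℂ)).re = 0 := by
    simp [Complex.mul_re, Complex.mul_im]
  rw [this, Real.exp_zero]

lemma l2norm_mul_exp (a : ℝ → ℂ) (k : ℕ) :
    l2norm (fun x => a x * Complex.exp (Complex.I * (k : ℂ) * (x : ℂ))) = l2norm a := by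
  unfold l2norm
  congr 1
  refine intervalIntegral.integral_congr fun x _ => ?_
  rw [norm_mul, norm_exp_I k x, mul_one]

lemma l2norm_exp (k : ℕ) :
    l2norm (fun x : ℝ => Complex.exp (Complex.I * (k : ℂ) * (x : ℂ)))
      = Real.sqrt (2 * π) := by
  unfold l2norm
  congr 1
  have : ∀ x ∈ Set.uIcc (0:ℝ) (2*π),
      ‖Complex.exp (Complex.I * (k : ℂ) * (x : ℂ))‖ ^ 2 = 1 := fun x _ => by
    rw [norm_exp_I k x]; norm_num
  rw [intervalIntegral.integral_congr this, intervalIntegral.integral_const]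
  simp

lemma exp_smooth (k : ℕ) :
    ContDiff ℝ (⊤ : ℕ∞) (fun y : ℝ => Complex.exp (Complex.I * (k : ℂ) * (y : ℂ))) := by
  apply Complex.contDiff_exp.comp
  exact contDiff_const.mul Complex.ofRealCLM.contDiff

lemma exp_periodic (k : ℕ) :
    Function.Periodic (fun y : ℝ => Complex.exp (Complex.I * (k : ℂ) * (y : ℂ))) (2 * π) := by
  intro y
  have : Complex.I * (k : ℂ) * ((y + 2 * π : ℝ) : ℂ)
      = Complex.I * (k : ℂ) * (y : ℂ) + ((k : ℤ) : ℂ) * (2 * (π : ℂ) * Complex.I) := by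
    push_cast; ring
  simp only [this, Complex.exp_add, Complex.exp_int_mul_two_pi_mul_I, mul_one]

/-- if the commutator `[|D|, a]` is `L²`-bounded with norm `M` and
`supp a ∩ supp χ = ∅`, `a ≠ 0`, then the quasimodes `u_k = a e^{ikx}` satisfy
`‖P(√k)u_k‖ ≤ (M√(2π)/‖a‖) ‖u_k‖`; consequently no resolvent bound
`‖P(τ)⁻¹‖ ≤ C|τ|^{-δ}` with `δ > 0` can hold for all large real `τ`. -/
theorem stmt18
    (χ : ℝ → ℝ) (Mχ : ℝ) (hMχ : ∀ x, |χ x| ≤ Mχ) (hχpos : ∀ x, 0 ≤ χ x)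
    (a : ℝ → ℂ) (ha : ContDiff ℝ (⊤ : ℕ∞) a) (hap : Function.Periodic a (2 * π))
    (hdisj : Disjoint (Function.support a) (Function.support χ))
    (hane : 0 < l2norm a) (M : ℝ)
    (hcomm : ∀ v : ℝ → ℂ, ContDiff ℝ (⊤ : ℕ∞) v → Function.Periodic v (2 * π) →
      l2norm (fun x => absD (fun y => a y * v y) x - a x * absD v x) ≤ M * l2norm v) :
    (∀ k : ℕ, 0 < k →
      l2norm (fun x =>
          absD (fun y => a y * Complex.exp (Complex.I * (k : ℂ) * (y : ℂ))) x
            - Complex.I * (Real.sqrt k : ℂ) * (χ x : ℂ) *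
                (a x * Complex.exp (Complex.I * (k : ℂ) * (x : ℂ)))
            - (k : ℂ) * (a x * Complex.exp (Complex.I * (k : ℂ) * (x : ℂ)))) ≤
        (M * Real.sqrt (2 * π) / l2norm a) *
          l2norm (fun x => a x * Complex.exp (Complex.I * (k : ℂ) * (x : ℂ)))) ∧
    ¬ ∃ δ : ℝ, 0 < δ ∧ ∃ C : ℝ, ∀ τ : ℝ, |τ| > C →
        ∀ u : ℝ → ℂ, ContDiff ℝ (⊤ : ℕ∞) u → Function.Periodic u (2 * π) →
          l2norm u ≤ C * |τ| ^ (-δ) *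
            l2norm (fun x => absD u x - Complex.I * (τ : ℂ) * (χ x : ℂ) * u x
              - (τ : ℂ) ^ 2 * u x) := by
  -- the quasimode bound
  have hmid : ∀ (k : ℕ) (x : ℝ) (c : ℂ),
      c * (χ x : ℂ) * (a x * Complex.exp (Complex.I * (k : ℂ) * (x : ℂ))) = 0 := by
    intro k x c
    by_cases h : a x = 0
    · simp [h]
    · have hx : x ∈ Function.support a := h
      have : χ x = 0 := by
        by_contra hc
        exact Set.disjoint_left.mp hdisj hx hc
      simp [this]
  have hfun : ∀ k : ℕ,
      (fun x =>
          absD (fun y => a y * Complex.exp (Complex.I * (k : ℂ) * (y : ℂ))) x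
            - Complex.I * (Real.sqrt k : ℂ) * (χ x : ℂ) *
                (a x * Complex.exp (Complex.I * (k : ℂ) * (x : ℂ)))
            - (k : ℂ) * (a x * Complex.exp (Complex.I * (k : ℂ) * (x : ℂ))))
        = (fun x =>
          absD (fun y => a y * Complex.exp (Complex.I * (k : ℂ) * (y : ℂ))) x
            - a x * absD (fun y => Complex.exp (Complex.I * (k : ℂ) * (y : ℂ))) x) := by
    intro k
    funext x
    rw [hmid k x (Complex.I * (Real.sqrt k : ℂ)), absD_exp]
    ring
  have hbound : ∀ k : ℕ,
      l2norm (fun x =>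
          absD (fun y => a y * Complex.exp (Complex.I * (k : ℂ) * (y : ℂ))) x
            - Complex.I * (Real.sqrt k : ℂ) * (χ x : ℂ) *
                (a x * Complex.exp (Complex.I * (k : ℂ) * (x : ℂ)))
            - (k : ℂ) * (a x * Complex.exp (Complex.I * (k : ℂ) * (x : ℂ))))
        ≤ M * Real.sqrt (2 * π) := by
    intro k
    rw [hfun k]
    calc l2norm (fun x =>
          absD (fun y => a y * Complex.exp (Complex.I * (k : ℂ) * (y : ℂ))) x
            - a x * absD (fun y => Complex.exp (Complex.I * (k : ℂ) * (y : ℂ))) x)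
        ≤ M * l2norm (fun y : ℝ => Complex.exp (Complex.I * (k : ℂ) * (y : ℂ))) :=
          hcomm _ (exp_smooth k) (exp_periodic k)
      _ = M * Real.sqrt (2 * π) := by rw [l2norm_exp]
  have part1 : ∀ k : ℕ, 0 < k →
      l2norm (fun x =>
          absD (fun y => a y * Complex.exp (Complex.I * (k : ℂ) * (y : ℂ))) x
            - Complex.I * (Real.sqrt k : ℂ) * (χ x : ℂ) *
                (a x * Complex.exp (Complex.I * (k : ℂ) * (x : ℂ)))
            - (k : ℂ) * (a x * Complex.exp (Complex.I * (k : ℂ) * (x : ℂ)))) ≤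
        (M * Real.sqrt (2 * π) / l2norm a) *
          l2norm (fun x => a x * Complex.exp (Complex.I * (k : ℂ) * (x : ℂ))) := by
    intro k _
    rw [l2norm_mul_exp a k, div_mul_cancel₀ _ (ne_of_gt hane)]
    exact hbound k
  refine ⟨part1, ?_⟩
  rintro ⟨δ, hδ, C, hC⟩
  -- nonnegativity of the bound
  have hM2 : 0 ≤ M * Real.sqrt (2 * π) :=
    le_trans (Real.sqrt_nonneg _) (hbound 1)
  -- choose k large
  have hsqT : Filter.Tendsto (fun k : ℕ => Real.sqrt (k : ℝ)) Filter.atTop Filter.atTop := by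
    have h := (tendsto_rpow_atTop (by norm_num : (0:ℝ) < 1/2)).comp
      (tendsto_natCast_atTop_atTop (R := ℝ))
    refine h.congr fun k => ?_
    exact (Real.sqrt_eq_rpow _).symm
  have hzero : Filter.Tendsto
      (fun k : ℕ => |C| * (Real.sqrt (k : ℝ)) ^ (-δ) * (M * Real.sqrt (2 * π)))
      Filter.atTop (nhds 0) := by
    have h1 : Filter.Tendsto (fun k : ℕ => (Real.sqrt (k : ℝ)) ^ (-δ))
        Filter.atTop (nhds 0) := (tendsto_rpow_neg_atTop hδ).comp hsqT
    have h2 := (h1.const_mul (|C|)).mul_const (M * Real.sqrt (2 * π))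
    simpa using h2
  have hev : ∀ᶠ k : ℕ in Filter.atTop,
      (0 < k ∧ C < Real.sqrt (k : ℝ)) ∧
        |C| * (Real.sqrt (k : ℝ)) ^ (-δ) * (M * Real.sqrt (2 * π)) < l2norm a :=
    (((Filter.eventually_gt_atTop 0).and (hsqT.eventually_gt_atTop C)).and
      (hzero.eventually_lt_const hane))
  obtain ⟨k, ⟨hk0, hkC⟩, hklt⟩ := hev.exists
  -- apply the assumed resolvent bound to u_k
  set e : ℝ → ℂ := fun y => Complex.exp (Complex.I * (k : ℂ) * (y : ℂ)) with he
  set u : ℝ → ℂ := fun x => a x * e x with hu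
  have husm : ContDiff ℝ (⊤ : ℕ∞) u := ha.mul (exp_smooth k)
  have hupr : Function.Periodic u (2 * π) := hap.mul (exp_periodic k)
  have hτ : |Real.sqrt (k : ℝ)| > C := by
    rwa [abs_of_nonneg (Real.sqrt_nonneg _)]
  have key := hC (Real.sqrt (k : ℝ)) hτ u husm hupr
  have hsq2 : ((Real.sqrt (k : ℝ) : ℝ) : ℂ) ^ 2 = ((k : ℕ) : ℂ) := by
    rw [← Complex.ofReal_pow, Real.sq_sqrt (by positivity : (0:ℝ) ≤ (k : ℝ))]
    norm_num
  have hfun2 : (fun x => absD u x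
        - Complex.I * ((Real.sqrt (k : ℝ) : ℝ) : ℂ) * (χ x : ℂ) * u x
        - ((Real.sqrt (k : ℝ) : ℝ) : ℂ) ^ 2 * u x)
      = (fun x =>
          absD (fun y => a y * Complex.exp (Complex.I * (k : ℂ) * (y : ℂ))) x
            - Complex.I * (Real.sqrt (k : ℕ) : ℂ) * (χ x : ℂ) *
                (a x * Complex.exp (Complex.I * (k : ℂ) * (x : ℂ)))
            - (k : ℂ) * (a x * Complex.exp (Complex.I * (k : ℂ) * (x : ℂ)))) := by
    funext x
    rw [hsq2]
  rw [hfun2] at key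
  have hL : l2norm u = l2norm a := l2norm_mul_exp a k
  rw [hL] at key
  -- derive the contradiction
  have hP := hbound k
  have hPnn : 0 ≤ l2norm (fun x =>
          absD (fun y => a y * Complex.exp (Complex.I * (k : ℂ) * (y : ℂ))) x
            - Complex.I * (Real.sqrt (k : ℕ) : ℂ) * (χ x : ℂ) *
                (a x * Complex.exp (Complex.I * (k : ℂ) * (x : ℂ)))
            - (k : ℂ) * (a x * Complex.exp (Complex.I * (k : ℂ) * (x : ℂ)))) :=
    Real.sqrt_nonneg _
  have hrnn : (0:ℝ) ≤ (Real.sqrt (k : ℝ)) ^ (-δ) :=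
    Real.rpow_nonneg (Real.sqrt_nonneg _) _
  have hCabs : C ≤ |C| := le_abs_self C
  have habs : |Real.sqrt (k : ℝ)| = Real.sqrt (k : ℝ) :=
    abs_of_nonneg (Real.sqrt_nonneg _)
  rw [habs] at key
  have : l2norm a < l2norm a := by
    calc l2norm a ≤ C * (Real.sqrt (k : ℝ)) ^ (-δ) * _ := key
      _ ≤ |C| * (Real.sqrt (k : ℝ)) ^ (-δ) * (M * Real.sqrt (2 * π)) := by
          nlinarith [mul_nonneg (mul_nonneg (sub_nonneg.mpr hCabs) hrnn) hPnn,
            mul_nonneg (mul_nonneg (abs_nonneg C) hrnn) (sub_nonneg.mpr hP)]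
      _ < l2norm a := hklt
  exact lt_irrefl _ this
end
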